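/- arXiv:2409.10270 — 4 statements merged into one kernel-verified Lean document; each statement's English description precedes it below -/
import Mathlib

section
/- Let s, t ∈ S with s ≠ t and m = m_{s,t} < ∞ in a Coxeter group W[Γ]. Then ρ(Prod_R(s,t,m-1))(α_s) = α_s if m is even, and = α_t if m is odd, where Prod_R(s,t,k) denotes the alternating word ⋯tst of length k. -/
open CoxeterSystem

namespace VAG

variable {B : Type*} [DecidableEq B] [Fintype B]

/-- The entry of the standard bilinear form: `⟨α_s, α_t⟩ = -2cos(π/m_{s,t})`, `-2` if `m = ∞`. -/
noncomputable def entry (M : CoxeterMatrix B) (s t : B) : ℝ :=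
  if M s t = 0 then -2 else -2 * Real.cos (Real.pi / (M s t))

/-- The standard symmetric bilinear form on `V = B → ℝ`. -/
noncomputable def form (M : CoxeterMatrix B) (v w : B → ℝ) : ℝ :=
  ∑ s, ∑ t, v s * w t * entry M s t

/-- The simple root `α_s`. -/
noncomputable def root (s : B) : B → ℝ := Pi.single s 1

/-- The reflection `r_{α_s}(v) = v - ⟨v, α_s⟩ α_s`. -/
noncomputable def refl (M : CoxeterMatrix B) (s : B) (v : B → ℝ) : B → ℝ :=
  v - form M v (root s) • root s

variable {W : Type*} [Group W] {M : CoxeterMatrix B}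

/-- `ρ` is the Tits representation of the Coxeter system `cs`. -/
def IsTits (cs : CoxeterSystem M W) (ρ : W →* ((B → ℝ) ≃ₗ[ℝ] (B → ℝ))) : Prop :=
  ∀ (s : B) (v : B → ℝ), ρ (cs.simple s) v = refl M s v

/-- The root system `Φ[Γ]`. -/
def Phi (ρ : W →* ((B → ℝ) ≃ₗ[ℝ] (B → ℝ))) : Set (B → ℝ) :=
  {v | ∃ (w : W) (s : B), v = ρ w (root s)}

/-- Positive roots. -/
def PhiPos (ρ : W →* ((B → ℝ) ≃ₗ[ℝ] (B → ℝ))) : Set (B → ℝ) :=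
  {v ∈ Phi ρ | ∀ s, 0 ≤ v s}

/-- Negative roots. -/
def PhiNeg (ρ : W →* ((B → ℝ) ≃ₗ[ℝ] (B → ℝ))) : Set (B → ℝ) :=
  {v ∈ Phi ρ | ∀ s, v s ≤ 0}

/-- The sign `ε(s, β)`. -/
noncomputable def eps (M : CoxeterMatrix B) (s : B) (β : B → ℝ) : ℤ :=
  if form M β (root s) < 0 then 1 else if 0 < form M β (root s) then -1 else 0

/-- The inversion set `Π(w)`. -/
def invSet (ρ : W →* ((B → ℝ) ≃ₗ[ℝ] (B → ℝ))) (w : W) : Set (B → ℝ) :=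
  {β ∈ PhiPos ρ | ρ w β ∈ PhiNeg ρ}

set_option linter.unusedSectionVars false in
lemma form_comb (M : CoxeterMatrix B) (a b : ℝ) (s t u : B) :
    form M (a • root s + b • root t) (root u) = a * entry M s u + b * entry M t u := by
  simp [form, root, Pi.single_apply, add_mul, mul_ite, ite_mul, Finset.sum_add_distrib]

set_option linter.unusedSectionVars false in
lemma entry_self (M : CoxeterMatrix B) (s : B) : entry M s s = 2 := by
  simp [entry, M.diagonal s, Real.cos_pi]

/-- `ρ(Prod_R(s,t,m-1))(α_s) = α_s` if `m` even, `α_t` if `m` odd. -/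
theorem rho_alternatingWord_root {W : Type*} [Group W] {M : CoxeterMatrix B}
    (cs : CoxeterSystem M W) (ρ : W →* ((B → ℝ) ≃ₗ[ℝ] (B → ℝ))) (hρ : IsTits cs ρ)
    (s t : B) (hst : s ≠ t) (hfin : M s t ≠ 0) :
    ρ (cs.wordProd (alternatingWord s t (M s t - 1))) (root s)
      = if Even (M s t) then root s else root t := by
  set m := M s t with hm
  have hm2 : 2 ≤ m := by
    rcases Nat.lt_or_ge m 2 with h | h
    · interval_cases m
      · exact absurd rfl hfin
      · exact absurd hm.symm (M.off_diagonal s t hst)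
    · exact h
  set θ : ℝ := Real.pi / m with hθ
  have hθpos : 0 < θ := div_pos Real.pi_pos (by positivity)
  have hθlt : θ < Real.pi := by
    exact div_lt_self Real.pi_pos (by exact_mod_cast (by omega : 1 < m))
  have hsin : Real.sin θ ≠ 0 := ne_of_gt (Real.sin_pos_of_pos_of_lt_pi hθpos hθlt)
  set g : ℕ → ℝ := fun k => Real.sin (k * θ) / Real.sin θ with hg
  have hc : entry M t s = -2 * Real.cos θ := by
    rw [entry, M.symmetric t s, ← hm, if_neg hfin, hθ]
  have hc' : entry M s t = -2 * Real.cos θ := by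
    rw [entry, ← hm, if_neg hfin, hθ]
  have key : ∀ k : ℕ, ρ (cs.wordProd (alternatingWord s t k)) (root s)
      = if Even k then g (k+1) • root s + g k • root t
        else g k • root s + g (k+1) • root t := by
    intro k
    induction k with
    | zero =>
      rw [if_pos Even.zero]
      have h1 : g 1 = 1 := by simp [hg, div_self hsin]
      have h0 : g 0 = 0 := by simp [hg]
      rw [h1, h0, one_smul, zero_smul, add_zero]
      simp [alternatingWord]
    | succ k ih =>
      have hrec : g (k+2) = 2 * Real.cos θ * g (k+1) - g k := by
        simp only [hg]
        have e2 : ((k:ℝ)+2) * θ = ((k:ℝ)+1) * θ + θ := by ring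
        have e0 : (k:ℝ) * θ = ((k:ℝ)+1) * θ - θ := by ring
        push_cast
        rw [e2, e0, Real.sin_add, Real.sin_sub]
        field_simp
        ring
      rw [alternatingWord_succ', wordProd_cons, map_mul]
      show ρ (cs.simple (if Even k then t else s))
        (ρ (cs.wordProd (alternatingWord s t k)) (root s)) = _
      rw [ih]
      by_cases hk : Even k
      · have hk1 : ¬ Even (k+1) := by simp [Nat.even_add_one, hk]
        simp only [if_pos hk, if_neg hk1]
        rw [hρ, refl, form_comb, hc', entry_self]
        funext u
        simp only [Pi.add_apply, Pi.sub_apply, Pi.smul_apply, smul_eq_mul]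
        have : g (k+1+1) = 2 * Real.cos θ * g (k+1) - g k := hrec
        rw [this]
        ring
      · have hk1 : Even (k+1) := Nat.even_add_one.mpr hk
        simp only [if_neg hk, if_pos hk1]
        rw [hρ, refl, form_comb, entry_self, hc]
        funext u
        simp only [Pi.add_apply, Pi.sub_apply, Pi.smul_apply, smul_eq_mul]
        rw [(by exact hrec : g (k+1+1) = 2 * Real.cos θ * g (k+1) - g k)]
        ring
  have hcast : ((m - 1 : ℕ) : ℝ) = (m : ℝ) - 1 := by
    rw [Nat.cast_sub (by omega : 1 ≤ m), Nat.cast_one]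
  have hgm : g (m - 1 + 1) = 0 := by
    have : m - 1 + 1 = m := by omega
    rw [this, hg]
    simp only
    rw [hθ, mul_div_cancel₀ Real.pi (by exact_mod_cast (by omega : m ≠ 0))]
    simp [Real.sin_pi]
  have hgm1 : g (m - 1) = 1 := by
    rw [hg]; simp only
    rw [hcast]
    have : ((m:ℝ) - 1) * θ = Real.pi - θ := by
      rw [hθ]; field_simp
    rw [this, Real.sin_pi_sub, div_self hsin]
  have heven : Even (m - 1) ↔ ¬ Even m := by
    rw [Nat.even_sub (by omega : 1 ≤ m)]
    simp [Nat.even_iff]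
  rw [key (m - 1)]
  by_cases h : Even m
  · rw [if_neg (by rw [heven]; exact not_not_intro h), if_pos h, hgm, hgm1]
    funext u; simp [root]
  · rw [if_pos (heven.mpr h), if_neg h, hgm, hgm1]
    funext u; simp [root]


end VAG
end

section
/- Let ŵ = τ_{s_1}⋯τ_{s_r} be a word in the generators τ_s, w = s_1⋯s_r the corresponding Coxeter group element, and w̃ = τ_{s_r}⋯τ_{s_1} the reverse word. For a positive root β with β ∉ Π(w), define κ(ŵ, β) = Σ_{i=1}^{r} ε(s_i, ρ(s_{i+1}⋯s_r)(β)) (summing contributions from right to left). If γ = ρ(w)(β), then κ(ŵ, β) = -κ(w̃, γ). -/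
open CoxeterSystem

namespace VAG

variable {B : Type*} [DecidableEq B] [Fintype B]

variable {W : Type*} [Group W] {M : CoxeterMatrix B}

variable {W : Type*} [Group W] {M : CoxeterMatrix B}

/-- `κ(ŵ, β) = Σ_{i=1}^{r} ε(s_i, ρ(s_{i+1} ⋯ s_r)(β))` for a word `ŵ = τ_{s_1} ⋯ τ_{s_r}`. -/
noncomputable def kappa (cs : CoxeterSystem M W) (ρ : W →* ((B → ℝ) ≃ₗ[ℝ] (B → ℝ)))
    (ω : List B) (β : B → ℝ) : ℤ :=
  ∑ i : Fin ω.length, eps M (ω.get i) (ρ (cs.wordProd (ω.drop (i + 1))) β)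


set_option linter.unusedSectionVars false in
lemma form_sub_left (M : CoxeterMatrix B) (u v w : B → ℝ) :
    form M (u - v) w = form M u w - form M v w := by
  simp [form, sub_mul, Finset.sum_sub_distrib]

set_option linter.unusedSectionVars false in
lemma form_smul_left (M : CoxeterMatrix B) (c : ℝ) (u v : B → ℝ) :
    form M (c • u) v = c * form M u v := by
  simp only [form, Finset.mul_sum, Pi.smul_apply, smul_eq_mul]
  exact Finset.sum_congr rfl fun s _ => Finset.sum_congr rfl fun t _ => by ring

lemma form_root_root (M : CoxeterMatrix B) (s t : B) :
    form M (root s) (root t) = entry M s t := by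
  simp [form, root, Pi.single_apply, ite_mul, mul_ite, Finset.sum_ite_eq]

lemma form_root_self (M : CoxeterMatrix B) (s : B) : form M (root s) (root s) = 2 := by
  rw [form_root_root, entry, M.diagonal]; norm_num

lemma form_refl_root (M : CoxeterMatrix B) (s : B) (v : B → ℝ) :
    form M (refl M s v) (root s) = - form M v (root s) := by
  rw [refl, form_sub_left, form_smul_left, form_root_self]; ring

lemma eps_refl (M : CoxeterMatrix B) (s : B) (v : B → ℝ) :
    eps M s (refl M s v) = - eps M s v := by
  simp only [eps, form_refl_root]
  rcases lt_trichotomy (form M v (root s)) 0 with h | h | h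
  · simp [h, not_lt.mpr h.le, neg_pos.mpr h]
  · simp [h]
  · simp [not_lt.mpr h.le, h, neg_lt_zero.mpr h, not_lt.mpr (neg_nonpos_of_nonneg h.le)]

lemma kappa_nil (cs : CoxeterSystem M W) (ρ : W →* ((B → ℝ) ≃ₗ[ℝ] (B → ℝ))) (β : B → ℝ) :
    kappa cs ρ [] β = 0 := by simp [kappa]

lemma kappa_cons (cs : CoxeterSystem M W) (ρ : W →* ((B → ℝ) ≃ₗ[ℝ] (B → ℝ)))
    (s : B) (l : List B) (β : B → ℝ) :
    kappa cs ρ (s :: l) β = eps M s (ρ (cs.wordProd l) β) + kappa cs ρ l β := by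
  simp [kappa, Fin.sum_univ_succ]

lemma kappa_append (cs : CoxeterSystem M W) (ρ : W →* ((B → ℝ) ≃ₗ[ℝ] (B → ℝ)))
    (l₁ l₂ : List B) (β : B → ℝ) :
    kappa cs ρ (l₁ ++ l₂) β = kappa cs ρ l₁ (ρ (cs.wordProd l₂) β) + kappa cs ρ l₂ β := by
  induction l₁ with
  | nil => simp [kappa_nil]
  | cons s l ih =>
    rw [List.cons_append, kappa_cons, kappa_cons, ih, cs.wordProd_append, map_mul]
    simp [add_assoc]

theorem kappa_reverse' (cs : CoxeterSystem M W)
    (ρ : W →* ((B → ℝ) ≃ₗ[ℝ] (B → ℝ))) (hρ : IsTits cs ρ)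
    (ω : List B) (β : B → ℝ) :
    kappa cs ρ ω β = - kappa cs ρ ω.reverse (ρ (cs.wordProd ω) β) := by
  have hmul : ∀ (f g : (B → ℝ) ≃ₗ[ℝ] (B → ℝ)) (x : B → ℝ), (f * g) x = f (g x) :=
    fun _ _ _ => rfl
  induction ω generalizing β with
  | nil => simp [kappa_nil]
  | cons s l ih =>
    rw [List.reverse_cons, kappa_append, kappa_cons]
    have e0 : ρ (cs.wordProd [s]) (ρ (cs.wordProd (s :: l)) β) = ρ (cs.wordProd l) β := by
      rw [← hmul, ← map_mul, ← cs.wordProd_append]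
      have h : cs.wordProd ([s] ++ s :: l) = cs.wordProd l := by
        rw [cs.wordProd_append, cs.wordProd_cons, cs.wordProd_cons, cs.wordProd_nil, mul_one,
          ← mul_assoc, cs.simple_mul_simple_self, one_mul]
      rw [h]
    have e2 : kappa cs ρ [s] (ρ (cs.wordProd (s :: l)) β)
        = - eps M s (ρ (cs.wordProd l) β) := by
      rw [kappa_cons, kappa_nil, add_zero, cs.wordProd_nil, map_one]
      show eps M s (ρ (cs.wordProd (s :: l)) β) = _
      rw [cs.wordProd_cons, map_mul, hmul, hρ s, eps_refl]
    rw [e0, e2, ih]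
    ring

/-- if `β ∉ Π(w)` and `γ = ρ(w)(β)`, then `κ(ŵ, β) = -κ(w̃, γ)`, where `w̃` is the
reverse word of `ŵ`. -/
theorem kappa_reverse (cs : CoxeterSystem M W)
    (ρ : W →* ((B → ℝ) ≃ₗ[ℝ] (B → ℝ))) (hρ : IsTits cs ρ)
    (ω : List B) (β γ : B → ℝ) (hβ : β ∈ PhiPos ρ)
    (hβw : β ∉ invSet ρ (cs.wordProd ω)) (hγ : γ = ρ (cs.wordProd ω) β) :
    kappa cs ρ ω β = - kappa cs ρ ω.reverse γ := by
  rw [hγ]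
  exact kappa_reverse' cs ρ hρ ω β

end VAG
end

section
/- Let G = A ⋊ H with A = ⊕_{β∈B} ℤ·e_β free abelian and H acting by permuting the basis. Two elements w = (Σ a_β e_β)·θ and w' = (Σ b_β e_β)·θ with the same H-component θ are conjugate by an element of A if and only if for every θ-orbit O ⊆ B, Σ_{β∈O} a_β = Σ_{β∈O} b_β. -/
namespace VAG

/-- The homomorphism `H →* MulAut (Multiplicative (ι →₀ ℤ))` induced by a permutation action
`θ : H →* Equiv.Perm ι`, acting on the free abelian group `ι →₀ ℤ` by permuting the basis. -/
noncomputable def permMulAut {ι H : Type*} [Group H] (θ : H →* Equiv.Perm ι) :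
    H →* MulAut (Multiplicative (ι →₀ ℤ)) :=
  MonoidHom.mk'
    (fun h => AddEquiv.toMultiplicative (Finsupp.domCongr (θ h) : (ι →₀ ℤ) ≃+ (ι →₀ ℤ)))
    (by
      intro h₁ h₂
      have key : ∀ a : ι →₀ ℤ,
          Finsupp.equivMapDomain (θ (h₁ * h₂)) a
            = Finsupp.equivMapDomain (θ h₁) (Finsupp.equivMapDomain (θ h₂) a) := by
        intro a
        rw [map_mul, Equiv.Perm.mul_def]
        exact Finsupp.equivMapDomain_trans (θ h₂) (θ h₁) a
      exact MulEquiv.ext fun a => key (Multiplicative.toAdd a))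

section Aux

open Finsupp

variable {ι : Type*} (σ : Equiv.Perm ι)

/-- The "twisted difference" additive map `Y ↦ Y - σ_* Y`. -/
noncomputable def Tmap : (ι →₀ ℤ) →+ (ι →₀ ℤ) :=
  AddMonoidHom.id _ - (Finsupp.domCongr (M := ℤ) σ).toAddMonoidHom

lemma Tmap_apply (Y : ι →₀ ℤ) : Tmap σ Y = Y - Finsupp.equivMapDomain σ Y := rfl

/-- Orbit of `c` under `σ`. -/
def orb (c : ι) : Set ι := {β | σ.SameCycle c β}

lemma range_eq_orb (c : ι) : Set.range (fun n : ℤ => (σ ^ n) c) = orb σ c := by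
  ext β
  simp [orb, Equiv.Perm.SameCycle, Set.mem_range]

lemma orb_inv_image (c : ι) : (fun β => σ⁻¹ β) '' orb σ c = orb σ c := by
  ext β
  constructor
  · rintro ⟨γ, hγ, rfl⟩
    exact hγ.trans (Equiv.Perm.SameCycle.symm ⟨1, by simp⟩)
  · intro hβ
    exact ⟨σ β, hβ.trans ⟨1, by simp⟩, by simp⟩

/-- The orbit-sum additive map. -/
noncomputable def orbSum (S : Set ι) : (ι →₀ ℤ) →+ ℤ where
  toFun f := ∑ᶠ β ∈ S, f β
  map_zero' := by simp
  map_add' f g := by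
    classical
    show (∑ᶠ β ∈ S, (f β + g β)) = (∑ᶠ β ∈ S, f β) + ∑ᶠ β ∈ S, g β
    exact finsum_mem_add_distrib'
      (((f.finite_support).inter_of_right S).subset (by intro x hx; exact ⟨hx.1, by simpa using hx.2⟩))
      (((g.finite_support).inter_of_right S).subset (by intro x hx; exact ⟨hx.1, by simpa using hx.2⟩))

lemma orbSum_eq_sum_filter (S : Set ι) (f : ι →₀ ℤ) [DecidablePred (· ∈ S)] :
    orbSum S f = ∑ β ∈ f.support.filter (· ∈ S), f β := by
  classical
  refine finsum_mem_eq_sum_of_inter_support_eq _ ?_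
  ext β
  simp [Function.support, and_comm]

lemma orbSum_Tmap (c : ι) (Y : ι →₀ ℤ) : orbSum (orb σ c) (Tmap σ Y) = 0 := by
  have h1 : orbSum (orb σ c) (Finsupp.equivMapDomain σ Y) = orbSum (orb σ c) Y := by
    show (∑ᶠ β ∈ orb σ c, Y (σ⁻¹ β)) = ∑ᶠ β ∈ orb σ c, Y β
    have := finsum_mem_image (s := orb σ c) (f := fun β => Y β) (g := fun β => σ⁻¹ β)
      (fun x _ y _ hxy => by simpa using hxy)
    rw [← this, orb_inv_image]
  rw [Tmap_apply, map_sub, h1, sub_self]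

lemma Tmap_single (β : ι) (k : ℤ) :
    Tmap σ (single β k) = single β k - single (σ β) k := by
  rw [Tmap_apply, equivMapDomain_single]

lemma exists_Tmap_pow (k : ℤ) (β : ι) (n : ℕ) :
    ∃ Y, Tmap σ Y = single β k - single ((σ ^ n) β) k := by
  induction n with
  | zero => exact ⟨0, by simp⟩
  | succ n ih =>
    obtain ⟨Y, hY⟩ := ih
    refine ⟨Y + single ((σ ^ n) β) k, ?_⟩
    rw [map_add, hY, Tmap_single]
    have : σ ((σ ^ n) β) = (σ ^ (n + 1)) β := by
      rw [pow_succ', Equiv.Perm.mul_apply]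
    rw [this]; abel

lemma exists_Tmap_sameCycle {β γ : ι} (hβγ : σ.SameCycle β γ) (k : ℤ) :
    ∃ Y, Tmap σ Y = single β k - single γ k := by
  obtain ⟨n, hn⟩ := hβγ
  rcases n with m | m
  · obtain ⟨Y, hY⟩ := exists_Tmap_pow σ k β m
    refine ⟨Y, ?_⟩
    rw [hY]
    rw [show ((σ : Equiv.Perm ι) ^ (m : ℕ)) β = γ by rw [← zpow_natCast]; exact hn]
  · have hγβ : (σ ^ (m + 1) : Equiv.Perm ι) γ = β := by
      have h1 := congrArg (⇑((σ : Equiv.Perm ι) ^ ((m : ℤ) + 1))) hn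
      rw [← Equiv.Perm.mul_apply, ← zpow_add, Int.negSucc_eq] at h1
      simp only [add_neg_cancel, zpow_zero, Equiv.Perm.coe_one, id_eq] at h1
      have h2 : ((m : ℤ) + 1) = ((m + 1 : ℕ) : ℤ) := by push_cast; ring
      rw [h2, zpow_natCast] at h1
      exact h1.symm
    obtain ⟨Y, hY⟩ := exists_Tmap_pow σ k γ (m + 1)
    refine ⟨-Y, ?_⟩
    rw [map_neg, hY, hγβ]; abel

end Aux

section Main

open Finsupp

/-- in `G = A ⋊ H` with `A = ⊕_{β ∈ B} ℤ e_β` and `H` permuting the basis, two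
elements `w = a·θ` and `w' = b·θ` with the same `H`-component are conjugate by an element of
`A` if and only if the coefficient sums of `a` and `b` over every orbit agree. -/
theorem conjugacy_criterion_semidirect {ι H : Type*} [Group H] (θ : H →* Equiv.Perm ι)
    (a b : ι →₀ ℤ) (h : H) :
    (∃ Y : ι →₀ ℤ,
        (SemidirectProduct.inl (Multiplicative.ofAdd Y) :
            Multiplicative (ι →₀ ℤ) ⋊[permMulAut θ] H) *
          (SemidirectProduct.inl (Multiplicative.ofAdd a) * SemidirectProduct.inr h) *
          (SemidirectProduct.inl (Multiplicative.ofAdd Y))⁻¹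
        = SemidirectProduct.inl (Multiplicative.ofAdd b) * SemidirectProduct.inr h) ↔
      ∀ c : ι, (∑ᶠ β ∈ Set.range (fun n : ℤ => ((θ h) ^ n) c), a β)
             = (∑ᶠ β ∈ Set.range (fun n : ℤ => ((θ h) ^ n) c), b β) := by
  classical
  set σ : Equiv.Perm ι := θ h with hσ
  -- Step 1: rewrite the conjugation equation as a `Tmap` equation.
  have step1 : ∀ Y : ι →₀ ℤ,
      ((SemidirectProduct.inl (Multiplicative.ofAdd Y) :
            Multiplicative (ι →₀ ℤ) ⋊[permMulAut θ] H) *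
          (SemidirectProduct.inl (Multiplicative.ofAdd a) * SemidirectProduct.inr h) *
          (SemidirectProduct.inl (Multiplicative.ofAdd Y))⁻¹
        = SemidirectProduct.inl (Multiplicative.ofAdd b) * SemidirectProduct.inr h) ↔
      Tmap σ Y = b - a := by
    intro Y
    have base : ((SemidirectProduct.inl (Multiplicative.ofAdd Y) :
            Multiplicative (ι →₀ ℤ) ⋊[permMulAut θ] H) *
          (SemidirectProduct.inl (Multiplicative.ofAdd a) * SemidirectProduct.inr h) *
          (SemidirectProduct.inl (Multiplicative.ofAdd Y))⁻¹
        = SemidirectProduct.inl (Multiplicative.ofAdd b) * SemidirectProduct.inr h) ↔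
        Y + a + Multiplicative.toAdd ((permMulAut θ) h (Multiplicative.ofAdd (-Y))) = b := by
      rw [SemidirectProduct.ext_iff]
      simp only [SemidirectProduct.mul_left, SemidirectProduct.mul_right, map_inv,
        SemidirectProduct.inv_left, SemidirectProduct.inv_right, SemidirectProduct.left_inl,
        SemidirectProduct.right_inl, SemidirectProduct.left_inr, SemidirectProduct.right_inr,
        map_one, mul_one, one_mul, inv_one, ← ofAdd_neg, ← ofAdd_add, and_true, and_iff_left rfl]
      simp [← ofAdd_neg, ← ofAdd_add]
      exact Iff.rfl
    rw [base]
    have hact : Multiplicative.toAdd ((permMulAut θ) h (Multiplicative.ofAdd (-Y)))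
        = Finsupp.equivMapDomain σ (-Y) := rfl
    have hneg : Finsupp.equivMapDomain σ (-Y) = -(Finsupp.equivMapDomain σ Y) :=
      map_neg (Finsupp.domCongr (M := ℤ) σ : (ι →₀ ℤ) ≃+ (ι →₀ ℤ)) Y
    rw [hact, hneg, Tmap_apply]
    constructor
    · intro hh; rw [← hh]; abel
    · intro hh
      have : Y - Finsupp.equivMapDomain σ Y + a = b - a + a := by rw [hh]
      rw [sub_add_cancel] at this
      rw [← this]; abel
  -- Step 2: rewrite orbit sums via `orbSum` and `orb`.
  have step2 : ∀ c : ι,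
      ((∑ᶠ β ∈ Set.range (fun n : ℤ => ((θ h) ^ n) c), a β)
        = (∑ᶠ β ∈ Set.range (fun n : ℤ => ((θ h) ^ n) c), b β)) ↔
      orbSum (orb σ c) (b - a) = 0 := by
    intro c
    have hrange : Set.range (fun n : ℤ => ((θ h) ^ n) c) = orb σ c := by
      have := range_eq_orb σ c
      simpa [hσ] using this
    rw [hrange]
    have : orbSum (orb σ c) (b - a) = orbSum (orb σ c) b - orbSum (orb σ c) a :=
      map_sub _ _ _
    rw [this, sub_eq_zero]
    exact ⟨fun hh => hh.symm, fun hh => hh.symm⟩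
  refine Iff.trans ?_ (forall_congr' step2).symm
  constructor
  · rintro ⟨Y, hY⟩ c
    rw [← (step1 Y).mp hY]
    exact orbSum_Tmap σ c Y
  · intro horb
    set d : ι →₀ ℤ := b - a with hdd
    let st : Setoid ι := ⟨σ.SameCycle,
      ⟨fun x => Equiv.Perm.SameCycle.refl σ x, fun hh => hh.symm, fun h1 h2 => h1.trans h2⟩⟩
    let r : ι → ι := fun β => (Quotient.mk st β).out
    have hr_same : ∀ β, σ.SameCycle (r β) β := fun β => Quotient.exact (Quotient.out_eq (Quotient.mk st β))
    have hr_eq : ∀ {β γ : ι}, σ.SameCycle β γ → r β = r γ := by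
      intro β γ hbg
      show (Quotient.mk st β).out = (Quotient.mk st γ).out
      rw [Quotient.sound hbg]
    choose Z hZ using fun β : ι => exists_Tmap_sameCycle σ (hr_same β).symm (d β)
    refine ⟨∑ β ∈ d.support, Z β, (step1 _).mpr ?_⟩
    have hTY : Tmap σ (∑ β ∈ d.support, Z β)
        = ∑ β ∈ d.support,
            ((Finsupp.single β (d β) : ι →₀ ℤ) - Finsupp.single (r β) (d β)) := by
      rw [map_sum]
      exact Finset.sum_congr rfl fun β _ => hZ β
    have hE : (∑ β ∈ d.support, (Finsupp.single (r β) (d β) : ι →₀ ℤ)) = 0 := by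
      ext γ
      rw [Finsupp.finset_sum_apply]
      simp only [Finsupp.single_apply, Finsupp.coe_zero, Pi.zero_apply]
      by_cases hne : ∃ β₀ ∈ d.support, r β₀ = γ
      · obtain ⟨β₀, hβ₀s, hβ₀⟩ := hne
        have hγr : r γ = γ := by
          rw [← hβ₀, hr_eq (hr_same β₀)]
        rw [← Finset.sum_filter]
        have hfilter : d.support.filter (fun β => r β = γ)
            = d.support.filter (fun β => β ∈ orb σ γ) := by
          refine Finset.filter_congr ?_
          intro β hβ
          constructor
          · rintro rfl
            exact hr_same β
          · intro hsc
            rw [← hr_eq hsc, hγr]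
        rw [hfilter]
        have hzero := horb γ
        rw [orbSum_eq_sum_filter] at hzero
        exact hzero
      · push_neg at hne
        exact Finset.sum_eq_zero fun β hβ => if_neg (hne β hβ)
    have hsingle : (∑ β ∈ d.support, (Finsupp.single β (d β) : ι →₀ ℤ)) = d :=
      Finsupp.sum_single d
    rw [hTY, Finset.sum_sub_distrib, hE, sub_zero, hsingle]

end Main

end VAG
end

section
/- The free product ℤ * ℤ/2 has the R_∞ property: for every automorphism φ of ℤ * ℤ/2, the number of φ-twisted conjugacy classes is infinite. -/
namespace VAG

open Monoid LaurentPolynomial SemidirectProduct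

abbrev G := Monoid.Coprod (Multiplicative ℤ) (Multiplicative (ZMod 2))

def ga : G := Coprod.inl (Multiplicative.ofAdd 1)
def gb : G := Coprod.inr (Multiplicative.ofAdd 1)

abbrev R := LaurentPolynomial (ZMod 2)

lemma R_add_self (v : R) : v + v = 0 := by
  ext n
  have : ∀ c : ZMod 2, c + c = 0 := by decide
  rw [show ((v + v).coeff n) = v.coeff n + v.coeff n from rfl]
  exact this _

lemma R_neg (v : R) : -v = v := by
  rw [neg_eq_iff_add_eq_zero, R_add_self]

/-- shift action of ℤ on Multiplicative R -/
noncomputable def shiftE (n : ℤ) : Multiplicative R ≃* Multiplicative R where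
  toFun x := Multiplicative.ofAdd (T n * x.toAdd)
  invFun x := Multiplicative.ofAdd (T (-n) * x.toAdd)
  left_inv x := by simp [← mul_assoc, ← T_add]
  right_inv x := by simp [← mul_assoc, ← T_add]
  map_mul' x y := by simp [mul_add, ofAdd_add]

noncomputable def act : Multiplicative ℤ →* MulAut (Multiplicative R) := by
  refine MonoidHom.mk' (fun n => shiftE n.toAdd) ?_
  intro m n
  ext x
  simp [shiftE, MulAut.mul_def, MulEquiv.trans_apply, ← mul_assoc, ← T_add, toAdd_mul, add_comm]

abbrev L := SemidirectProduct (Multiplicative R) (Multiplicative ℤ) act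

lemma act_apply (n : ℤ) (v : R) :
    act (Multiplicative.ofAdd n) (Multiplicative.ofAdd v) = Multiplicative.ofAdd (T n * v) := rfl

/-- the hom from Multiplicative (ZMod 2) to L sending the generator to inl 1 -/
noncomputable def piB : Multiplicative (ZMod 2) →* L where
  toFun x := if x.toAdd = 0 then 1 else inl (Multiplicative.ofAdd (1 : R))
  map_one' := by simp
  map_mul' x y := by
    have h2 : ∀ c : ZMod 2, c = 0 ∨ c = 1 := by decide
    have key : inl (Multiplicative.ofAdd (1 : R)) * inl (Multiplicative.ofAdd (1 : R)) = (1 : L) := by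
      rw [← map_mul, ← ofAdd_add, R_add_self]
      simp
    have h11 : (1 + 1 : ZMod 2) = 0 := by decide
    rcases h2 x.toAdd with hx | hx <;> rcases h2 y.toAdd with hy | hy <;>
      simp [toAdd_mul, hx, hy, key, h11]

noncomputable def pi : G →* L := Coprod.lift inr piB

noncomputable def sigma : G →* Multiplicative ℤ := rightHom.comp pi

@[simp] lemma pi_ga : pi ga = inr (Multiplicative.ofAdd 1) := rfl
@[simp] lemma pi_gb : pi gb = inl (Multiplicative.ofAdd (1 : R)) := by
  show pi (Coprod.inr _) = _
  simp [pi, piB]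

@[simp] lemma sigma_ga : sigma ga = Multiplicative.ofAdd 1 := by simp [sigma]
@[simp] lemma sigma_gb : sigma gb = 1 := by simp [sigma]

lemma gb_sq : gb * gb = 1 := by
  show Coprod.inr _ * Coprod.inr _ = 1
  rw [← map_mul, ← ofAdd_add]
  have : (Multiplicative.ofAdd (1 + 1 : ZMod 2)) = 1 := by decide
  rw [this, map_one]

/-- extensionality for homs out of G -/
lemma homExt {H : Type*} [Monoid H] {f g : G →* H} (ha : f ga = g ga) (hb : f gb = g gb) :
    f = g := by
  refine Coprod.hom_ext (MonoidHom.ext_mint ha) ?_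
  ext x
  have h2 : ∀ c : ZMod 2, c = 0 ∨ c = 1 := by decide
  rcases h2 x with rfl | rfl
  · simp
  · exact hb



open Multiplicative

lemma ga_zpow (k : ℤ) : ga ^ k = Coprod.inl (ofAdd k) := by
  rw [ga, ← map_zpow]
  congr 1
  rw [← ofAdd_zsmul, smul_eq_mul, mul_one]

lemma gb_inv : gb⁻¹ = gb := by
  rw [inv_eq_iff_mul_eq_one, gb_sq]

@[simp] lemma pi_ga_zpow (k : ℤ) : pi (ga ^ k) = inr (ofAdd k) := by
  rw [ga_zpow]; rfl

noncomputable def bn (n : ℤ) : G := ga ^ n * gb * ga ^ (-n)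

@[simp] lemma bn_zero : bn 0 = gb := by simp [bn]

lemma pi_bn (n : ℤ) : pi (bn n) = inl (ofAdd (T n)) := by
  rw [bn, map_mul, map_mul, pi_ga_zpow, pi_ga_zpow, pi_gb]
  have h1 : (ofAdd (-n)) = (ofAdd n)⁻¹ := rfl
  rw [h1, ← inl_aut, act_apply, mul_one]

lemma sigma_bn (n : ℤ) : sigma (bn n) = 1 := by
  simp [sigma, pi_bn]

lemma bn_sq (n : ℤ) : bn n * bn n = 1 := by
  rw [bn]
  have : ga ^ (-n) * (ga ^ n * gb * ga ^ (-n)) = gb * ga ^(-n) := by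
    rw [← mul_assoc, ← mul_assoc, ← zpow_add, neg_add_cancel, zpow_zero, one_mul]
  rw [mul_assoc (ga ^ n * gb), this, ← mul_assoc, mul_assoc (ga^n), gb_sq, mul_one, ← zpow_add,
    add_neg_cancel, zpow_zero]

lemma closure_ab : Subgroup.closure ({ga, gb} : Set G) = ⊤ := by
  have main : ∀ x : G, x ∈ Subgroup.closure ({ga, gb} : Set G) := by
    intro x
    induction x using Coprod.induction_on with
    | inl m =>
      have : Coprod.inl m = ga ^ m.toAdd := by rw [ga_zpow]; simp
      rw [this]
      exact zpow_mem (Subgroup.subset_closure (by simp)) _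
    | inr n =>
      have h2 : ∀ c : ZMod 2, c = 0 ∨ c = 1 := by decide
      rcases h2 n.toAdd with hx | hx
      · have hn : n = 1 := by
          apply_fun Multiplicative.toAdd
          simpa using hx
        rw [hn, map_one]
        exact one_mem _
      · have hn : n = ofAdd 1 := by
          apply_fun Multiplicative.toAdd
          simpa using hx
        rw [hn]
        exact Subgroup.subset_closure (by simp [gb])
    | mul x y hx hy => exact mul_mem hx hy
  rw [eq_top_iff]
  intro x _
  exact main x

lemma pi_surj : Function.Surjective pi := by
  have hR : ∀ v : R, inl (ofAdd v) ∈ pi.range := by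
    intro v
    have hz : ∀ v : R, v = 0 → (inl (ofAdd v) : L) = 1 := by
      intro v hv
      rw [hv, ofAdd_zero, map_one]
    induction v using AddMonoidAlgebra.induction with
    | zero =>
        rw [hz _ rfl]
        exact one_mem _
    | single_add a c f haf hc ih =>
        have hsplit : (inl (ofAdd (AddMonoidAlgebra.single a c + f)) : L) =
            inl (ofAdd (AddMonoidAlgebra.single a c)) * inl (ofAdd f) := by
          rw [← map_mul, ← ofAdd_add]
        rw [hsplit]
        refine mul_mem ?_ ih
        have h2 : ∀ c : ZMod 2, c = 0 ∨ c = 1 := by decide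
        rcases h2 c with rfl | rfl
        · exact absurd rfl hc
        · exact ⟨bn a, pi_bn a⟩
  intro y
  have hy : y = inl y.left * inr y.right := (inl_left_mul_inr_right y).symm
  rcases hR y.left.toAdd with ⟨x1, hx1⟩
  refine ⟨x1 * Coprod.inl y.right, ?_⟩
  have h1 : pi (Coprod.inl y.right) = inr y.right := rfl
  rw [map_mul, hx1, h1, ofAdd_toAdd]
  exact inl_left_mul_inr_right y

/-- conjugation stability helper -/
lemma conj_mem_closure {S : Set G} {g : G} (hg : ∀ s ∈ S, g * s * g⁻¹ ∈ Subgroup.closure S) :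
    ∀ x ∈ Subgroup.closure S, g * x * g⁻¹ ∈ Subgroup.closure S := by
  intro x hx
  induction hx using Subgroup.closure_induction with
  | mem s hs => exact hg s hs
  | one => simpa using one_mem _
  | mul x y _ _ hx hy =>
      have : g * (x * y) * g⁻¹ = (g * x * g⁻¹) * (g * y * g⁻¹) := by group
      rw [this]; exact mul_mem hx hy
  | inv x _ hx =>
      have : g * x⁻¹ * g⁻¹ = (g * x * g⁻¹)⁻¹ := by group
      rw [this]; exact inv_mem hx

noncomputable def Hclo : Subgroup G := Subgroup.closure (Set.range bn)

lemma conj_ga_bn (n : ℤ) : ga * bn n * ga⁻¹ = bn (n + 1) := by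
  rw [bn, bn]
  have h1 : ga * ga ^ n = ga ^ (n + 1) := by
    rw [← zpow_one_add]; ring_nf
  have h2 : ga ^ (-n) * ga⁻¹ = ga ^ (-(n+1)) := by
    rw [← zpow_neg_one, ← zpow_add]; ring_nf
  rw [← mul_assoc, ← mul_assoc, h1, mul_assoc, mul_assoc, h2, ← mul_assoc]

lemma conj_ga_inv_bn (n : ℤ) : ga⁻¹ * bn n * ga = bn (n - 1) := by
  have := conj_ga_bn (n - 1)
  rw [sub_add_cancel] at this
  rw [← this]; group

lemma conj_gb_bn (n : ℤ) : gb * bn n * gb⁻¹ = bn 0 * bn n * (bn 0)⁻¹ := by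
  rw [bn_zero]

instance Hclo_normal : Hclo.Normal := by
  rw [← Subgroup.normalizer_eq_top_iff, eq_top_iff, ← closure_ab, Subgroup.closure_le]
  intro g hg
  rcases hg with rfl | rfl
  · rw [SetLike.mem_coe, Subgroup.mem_normalizer_iff]
    intro h
    constructor
    · intro hh
      exact conj_mem_closure (fun s hs => by
        rcases hs with ⟨n, rfl⟩
        rw [conj_ga_bn]
        exact Subgroup.subset_closure ⟨n+1, rfl⟩) h hh
    · intro hh
      have := conj_mem_closure (g := ga⁻¹) (fun s hs => by
        rcases hs with ⟨n, rfl⟩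
        rw [show ga⁻¹ * bn n * ga⁻¹⁻¹ = ga⁻¹ * bn n * ga by rw [inv_inv], conj_ga_inv_bn]
        exact Subgroup.subset_closure ⟨n-1, rfl⟩) _ hh
      simpa [mul_assoc, Hclo] using this
  · rw [SetLike.mem_coe, Subgroup.mem_normalizer_iff]
    have key : ∀ x ∈ Hclo, gb * x * gb⁻¹ ∈ Hclo := by
      refine conj_mem_closure (fun s hs => ?_)
      rcases hs with ⟨n, rfl⟩
      rw [conj_gb_bn]
      have h0 : bn 0 ∈ Hclo := Subgroup.subset_closure ⟨0, rfl⟩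
      have hn : bn n ∈ Hclo := Subgroup.subset_closure ⟨n, rfl⟩
      exact mul_mem (mul_mem h0 hn) (inv_mem h0)
    intro h
    constructor
    · exact key h
    · intro hh
      have h3 := key _ hh
      rw [gb_inv] at h3
      have e : gb * (gb * h * gb) * gb = h := by
        rw [← mul_assoc, ← mul_assoc, gb_sq, one_mul, mul_assoc, gb_sq, mul_one]
      rwa [e] at h3

lemma Hclo_eq_ker : Hclo = sigma.ker := by
  apply le_antisymm
  · rw [Hclo, Subgroup.closure_le]
    rintro x ⟨n, rfl⟩
    simp [SetLike.mem_coe, MonoidHom.mem_ker, sigma_bn]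
  · intro x hx
    let j : Multiplicative ℤ →* (G ⧸ Hclo) :=
      zpowersHom (G ⧸ Hclo) ((QuotientGroup.mk : G → G ⧸ Hclo) ga)
    have key : j.comp sigma = (QuotientGroup.mk' Hclo : G →* G ⧸ Hclo) := by
      apply homExt
      · simp [j, sigma_ga, zpowersHom_apply]
      · rw [MonoidHom.comp_apply, sigma_gb, map_one]
        have : gb ∈ Hclo := by
          have h0 : bn 0 ∈ Hclo := Subgroup.subset_closure ⟨0, rfl⟩
          rwa [bn_zero] at h0
        symm
        rwa [QuotientGroup.mk'_apply, QuotientGroup.eq_one_iff]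
    have : (QuotientGroup.mk' Hclo : G →* G ⧸ Hclo) x = 1 := by
      rw [← key, MonoidHom.comp_apply, hx, map_one]
    rwa [QuotientGroup.mk'_apply, QuotientGroup.eq_one_iff] at this

section CharKernel

/-- any monoid hom image of `sigma` behaviour under an automorphism -/
lemma sigma_phi (phi : G ≃* G) (x : G) :
    sigma (phi x) = sigma x ^ (sigma (phi ga)).toAdd := by
  have : sigma.comp phi.toMonoidHom
      = (zpowGroupHom (sigma (phi ga)).toAdd).comp sigma := by
    apply homExt
    · simp only [MonoidHom.comp_apply, MulEquiv.coe_toMonoidHom, zpowGroupHom,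
        MonoidHom.coe_mk, OneHom.coe_mk, sigma_ga]
      apply Multiplicative.toAdd.injective
      simp
    · have h1 : sigma (phi gb) * sigma (phi gb) = 1 := by
        rw [← map_mul, ← map_mul, gb_sq, map_one, map_one]
      have h3 := congrArg Multiplicative.toAdd h1
      simp only [toAdd_mul, toAdd_one] at h3
      have h2 : sigma (phi gb) = 1 := by
        apply_fun Multiplicative.toAdd
        simp only [toAdd_one]
        omega
      simp [zpowGroupHom, sigma_gb, h2]
  exact congrFun (congrArg (fun f => f.toFun) this) x

lemma d_unit (phi : G ≃* G) :
    (sigma (phi ga)).toAdd = 1 ∨ (sigma (phi ga)).toAdd = -1 := by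
  set d := (sigma (phi ga)).toAdd with hd
  have h1 : sigma (phi (phi.symm ga)) = sigma (phi.symm ga) ^ d := sigma_phi phi _
  rw [MulEquiv.apply_symm_apply, sigma_ga] at h1
  have := congrArg Multiplicative.toAdd h1
  simp only [toAdd_ofAdd, toAdd_zpow, smul_eq_mul] at this
  have : IsUnit d := IsUnit.of_mul_eq_one _ (by linarith [this])
  rwa [Int.isUnit_iff] at this

lemma W_preserved (phi : G ≃* G) {x : G} (hx : x ∈ sigma.ker) : phi x ∈ sigma.ker := by
  rw [MonoidHom.mem_ker] at hx ⊢
  rw [sigma_phi phi, hx, one_zpow]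

lemma commute_inl (u v : Multiplicative R) : Commute (inl u : L) (inl v) := by
  show inl u * inl v = inl v * inl u
  rw [← map_mul, ← map_mul, mul_comm]

lemma mem_inl_range {y : L} (hy : rightHom y = 1) : y = inl y.left := by
  have h := inl_left_mul_inr_right y
  rw [rightHom_eq_right] at hy
  rw [hy, map_one, mul_one] at h
  exact h.symm

/-- the commutator subgroup of W=ker σ is contained in ker π -/
lemma commutator_le_ker_pi : ⁅sigma.ker, sigma.ker⁆ ≤ pi.ker := by
  rw [Subgroup.commutator_le]
  intro g1 hg1 g2 hg2
  rw [MonoidHom.mem_ker, map_commutatorElement]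
  have h1 : pi g1 = inl (pi g1).left := mem_inl_range (by rwa [MonoidHom.mem_ker] at hg1)
  have h2 : pi g2 = inl (pi g2).left := mem_inl_range (by rwa [MonoidHom.mem_ker] at hg2)
  rw [h1, h2, commutatorElement_eq_one_iff_commute]
  exact commute_inl _ _

noncomputable abbrev Wgrp := (sigma.ker : Subgroup G)

noncomputable def bnW (n : ℤ) : ↥Wgrp := ⟨bn n, by rw [MonoidHom.mem_ker, sigma_bn]⟩

/-- the "left part of pi" hom on W -/
noncomputable def qW : ↥Wgrp →* Multiplicative R where
  toFun w := (pi w.1).left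
  map_one' := by
    show (pi ((1 : ↥Wgrp) : G)).left = 1
    rw [show ((1 : ↥Wgrp) : G) = 1 from rfl, map_one, one_left]
  map_mul' w1 w2 := by
    have hr : (pi w1.1).right = 1 := by
      have := w1.2
      rwa [MonoidHom.mem_ker, sigma, MonoidHom.comp_apply, rightHom_eq_right] at this
    show (pi ((w1 * w2 : ↥Wgrp) : G)).left = (pi w1.1).left * (pi w2.1).left
    rw [show ((w1 * w2 : ↥Wgrp) : G) = w1.1 * w2.1 from rfl, map_mul, mul_left, hr, map_one,
      MulAut.one_apply]

noncomputable def qA : Abelianization ↥Wgrp →* Multiplicative R := Abelianization.lift qW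

noncomputable def elA (n : ℤ) : Additive (Abelianization ↥Wgrp) :=
  Additive.ofMul (Abelianization.of (bnW n))

lemma elA_two (n : ℤ) : (zmultiplesHom _ (elA n)) (2:ℤ) = 0 := by
  show (2:ℤ) • elA n = 0
  have hsq : bnW n * bnW n = 1 := by
    ext
    exact bn_sq n
  have : Abelianization.of (bnW n) * Abelianization.of (bnW n) = 1 := by
    rw [← map_mul, hsq, map_one]
  rw [two_zsmul]
  exact this

noncomputable def rho0 : R →+ Additive (Abelianization ↥Wgrp) :=
  (Finsupp.liftAddHom (fun n => ZMod.lift 2 ⟨zmultiplesHom _ (elA n), elA_two n⟩)).comp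
    AddMonoidAlgebra.coeffAddEquiv.toAddMonoidHom

noncomputable def rhoM : Multiplicative R →* Abelianization ↥Wgrp :=
  AddMonoidHom.toMultiplicativeLeft rho0

lemma rhoM_T (n : ℤ) : rhoM (Multiplicative.ofAdd (T n)) = Abelianization.of (bnW n) := by
  show (rho0 (T n)).toMul = _
  have : (T n : R) = AddMonoidAlgebra.single n (1 : ZMod 2) := rfl
  rw [this]
  have : rho0 (AddMonoidAlgebra.single n (1 : ZMod 2))
      = ZMod.lift 2 ⟨zmultiplesHom _ (elA n), elA_two n⟩ 1 := by
    exact Finsupp.liftAddHom_apply_single _ _ _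
  rw [this]
  have h1 : ((1:ℤ) : ZMod 2) = 1 := by decide
  rw [← h1, ZMod.lift_coe]
  show ((1:ℤ) • elA n).toMul = _
  rw [one_zsmul]
  rfl

lemma retraction (w : ↥Wgrp) : rhoM (qW w) = Abelianization.of w := by
  have hw : (w : G) ∈ Hclo := by rw [Hclo_eq_ker]; exact w.2
  have main : ∀ x (hx : x ∈ Hclo), ∀ (hW : x ∈ sigma.ker),
      rhoM (qW ⟨x, hW⟩) = Abelianization.of ⟨x, hW⟩ := by
    intro x hx
    induction hx using Subgroup.closure_induction with
    | mem s hs =>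
        rcases hs with ⟨n, rfl⟩
        intro hW
        have : qW ⟨bn n, hW⟩ = Multiplicative.ofAdd (T n) := by
          show (pi (bn n)).left = _
          rw [pi_bn, left_inl]
        rw [this, rhoM_T]
        rfl
    | one =>
        intro hW
        have : (⟨1, hW⟩ : ↥Wgrp) = 1 := rfl
        rw [this, map_one, map_one, map_one]
    | mul x y hxc hyc ihx ihy =>
        intro hW
        have hxW : x ∈ sigma.ker := by rw [← Hclo_eq_ker]; exact hxc
        have hyW : y ∈ sigma.ker := by rw [← Hclo_eq_ker]; exact hyc
        have : (⟨x*y, hW⟩ : ↥Wgrp) = ⟨x, hxW⟩ * ⟨y, hyW⟩ := rfl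
        rw [this, map_mul, map_mul, map_mul, ihx hxW, ihy hyW]
    | inv x hxc ihx =>
        intro hW
        have hxW : x ∈ sigma.ker := by rw [← Hclo_eq_ker]; exact hxc
        have : (⟨x⁻¹, hW⟩ : ↥Wgrp) = (⟨x, hxW⟩ : ↥Wgrp)⁻¹ := rfl
        rw [this, map_inv, map_inv, ihx hxW]
        exact (map_inv Abelianization.of _).symm
  have := main w.1 hw w.2
  simpa using this

lemma ker_pi_eq : pi.ker = ⁅(sigma.ker : Subgroup G), sigma.ker⁆ := by
  apply le_antisymm
  · intro x hx
    have hxW : x ∈ sigma.ker := by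
      rw [MonoidHom.mem_ker] at hx ⊢
      rw [sigma, MonoidHom.comp_apply, hx, map_one]
    set w : ↥Wgrp := ⟨x, hxW⟩ with hwdef
    have hq : qW w = 1 := by
      show (pi x).left = 1
      rw [MonoidHom.mem_ker] at hx
      rw [hx, one_left]
    have hof : Abelianization.of w = 1 := by
      rw [← retraction w, hq, map_one]
    have hcomm : w ∈ commutator ↥Wgrp := by
      have : (QuotientGroup.mk w : ↥Wgrp ⧸ commutator ↥Wgrp) = 1 := hof
      rwa [QuotientGroup.eq_one_iff] at this
    have : x ∈ Subgroup.map Wgrp.subtype (commutator ↥Wgrp) := ⟨w, hcomm, rfl⟩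
    rwa [commutator_def, Subgroup.map_commutator, ← MonoidHom.range_eq_map,
      Subgroup.range_subtype] at this
  · exact commutator_le_ker_pi

lemma ker_pi_char (phi : G ≃* G) {x : G} (hx : x ∈ pi.ker) : phi x ∈ pi.ker := by
  rw [ker_pi_eq] at hx ⊢
  have : phi x ∈ Subgroup.map phi.toMonoidHom ⁅(sigma.ker : Subgroup G), sigma.ker⁆ :=
    ⟨x, hx, rfl⟩
  rw [Subgroup.map_commutator] at this
  have hle : Subgroup.map phi.toMonoidHom sigma.ker ≤ sigma.ker := by
    rintro y ⟨z, hz, rfl⟩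
    exact W_preserved phi hz
  exact Subgroup.commutator_mono hle hle this

end CharKernel

section Phibar

variable (phi : G ≃* G)

noncomputable def phibar : L →* L :=
  (QuotientGroup.lift pi.ker (pi.comp phi.toMonoidHom)
    (fun x hx => by
      have : phi x ∈ pi.ker := ker_pi_char phi hx
      rwa [MonoidHom.mem_ker] at this)).comp
  (QuotientGroup.quotientKerEquivOfSurjective pi pi_surj).symm.toMonoidHom

lemma phibar_pi (g : G) : phibar phi (pi g) = pi (phi g) := by
  have he : (QuotientGroup.quotientKerEquivOfSurjective pi pi_surj)
      ((QuotientGroup.mk g : G ⧸ pi.ker)) = pi g := rfl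
  have hsymm : (QuotientGroup.quotientKerEquivOfSurjective pi pi_surj).symm (pi g)
      = (QuotientGroup.mk g : G ⧸ pi.ker) := by
    rw [← he, MulEquiv.symm_apply_apply]
  simp only [phibar, MonoidHom.comp_apply, MulEquiv.coe_toMonoidHom, hsymm]
  rfl

lemma inl_ofAdd_inj {u v : R} (h : (inl (Multiplicative.ofAdd u) : L)
    = inl (Multiplicative.ofAdd v)) : u = v :=
  Multiplicative.ofAdd.injective (inl_injective h)

lemma conj_inl (x : L) (m : Multiplicative R) :
    x * inl m * x⁻¹ = inl (act (rightHom x) m) := by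
  have hx : x = inl x.left * inr x.right := (inl_left_mul_inr_right x).symm
  have h1 : ((inl x.left : L) * inr x.right) * inl m * ((inl x.left : L) * inr x.right)⁻¹
      = (inl x.left : L) * ((inr x.right : L) * inl m * (inr x.right : L)⁻¹)
        * ((inl x.left : L))⁻¹ := by
    group
  have h2 : (inr x.right : L)⁻¹ = inr (x.right⁻¹) := by rw [map_inv]
  have h3 : (inr x.right : L) * inl m * (inr x.right : L)⁻¹ = inl (act x.right m) := by
    rw [h2, ← inl_aut]
  have h4 : (inl x.left : L) * inl (act x.right m) * (inl x.left : L)⁻¹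
      = inl (act x.right m) := by
    rw [← map_inv, ← map_mul, ← map_mul, mul_comm x.left, mul_assoc, mul_inv_cancel, mul_one]
  rw [← hx] at h1
  rw [h1, h3, h4, rightHom_eq_right]

section Dminus

variable (hd : sigma (phi ga) = Multiplicative.ofAdd (-1))

include hd in
lemma sigma_phi_neg (x : G) : sigma (phi x) = (sigma x)⁻¹ := by
  rw [sigma_phi phi, hd]
  apply Multiplicative.toAdd.injective
  simp

include hd in
lemma rightHom_phibar (y : L) : rightHom (phibar phi y) = (rightHom y)⁻¹ := by
  obtain ⟨g, rfl⟩ := pi_surj y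
  rw [phibar_pi]
  show sigma (phi g) = (sigma g)⁻¹
  exact sigma_phi_neg phi hd g

noncomputable def PhiR (v : R) : R :=
  ((phibar phi (inl (Multiplicative.ofAdd v))).left).toAdd

include hd in
lemma phibar_inl (v : R) :
    phibar phi (inl (Multiplicative.ofAdd v)) = inl (Multiplicative.ofAdd (PhiR phi v)) := by
  have h1 : rightHom (phibar phi (inl (Multiplicative.ofAdd v))) = 1 := by
    rw [rightHom_phibar phi hd, rightHom_inl, inv_one]
  have := mem_inl_range h1
  rw [this]
  rfl

include hd in
lemma PhiR_add (u v : R) : PhiR phi (u + v) = PhiR phi u + PhiR phi v := by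
  set w := u + v with hw
  have h1 : (inl (Multiplicative.ofAdd w) : L)
      = inl (Multiplicative.ofAdd u) * inl (Multiplicative.ofAdd v) := by
    rw [← map_mul, ← ofAdd_add, hw]
  have e1 : phibar phi (inl (Multiplicative.ofAdd w))
      = inl (Multiplicative.ofAdd (PhiR phi u + PhiR phi v)) := by
    rw [h1, map_mul, phibar_inl phi hd, phibar_inl phi hd, ← map_mul, ← ofAdd_add]
  have e2 := phibar_inl phi hd w
  exact inl_ofAdd_inj (e2.symm.trans e1)

include hd in
lemma PhiR_semilinear (n : ℤ) (v : R) : PhiR phi (T n * v) = T (-n) * PhiR phi v := by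
  set w := T n * v with hw
  have h1 : (inl (Multiplicative.ofAdd w) : L)
      = inr (Multiplicative.ofAdd n) * inl (Multiplicative.ofAdd v)
        * (inr (Multiplicative.ofAdd n) : L)⁻¹ := by
    rw [← map_inv, ← inl_aut, act_apply, hw]
  set P := phibar phi (inr (Multiplicative.ofAdd n)) with hP
  have e2 : phibar phi (inl (Multiplicative.ofAdd w))
      = P * inl (Multiplicative.ofAdd (PhiR phi v)) * P⁻¹ := by
    rw [h1, map_mul, map_mul, map_inv, phibar_inl phi hd]
  have e3 : P * inl (Multiplicative.ofAdd (PhiR phi v)) * P⁻¹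
      = inl (act (rightHom P) (Multiplicative.ofAdd (PhiR phi v))) := conj_inl _ _
  have e4 : rightHom P = Multiplicative.ofAdd (-n) := by
    rw [hP, rightHom_phibar phi hd, rightHom_inr]
    rfl
  have e5 := phibar_inl phi hd w
  have : (inl (Multiplicative.ofAdd (PhiR phi w)) : L)
      = inl (Multiplicative.ofAdd (T (-n) * PhiR phi v)) := by
    rw [← act_apply, ← e4, ← e3, ← e2, e5]
  exact inl_ofAdd_inj this

include hd in
lemma PhiR_eq (v : R) : PhiR phi v = invert v * PhiR phi 1 := by
  let A1 : R →+ R := AddMonoidHom.mk' (PhiR phi) (PhiR_add phi hd)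
  let A2 : R →+ R := AddMonoidHom.mk' (fun v => invert v * PhiR phi 1)
    (by
      intro u v
      show invert (u + v) * PhiR phi 1 = invert u * PhiR phi 1 + invert v * PhiR phi 1
      rw [map_add, add_mul])
  have hA : A1 = A2 := by
    apply AddMonoidAlgebra.addMonoidHom_ext
    intro a c
    have h2 : ∀ c : ZMod 2, c = 0 ∨ c = 1 := by decide
    rcases h2 c with rfl | rfl
    · rw [show (AddMonoidAlgebra.single a (0:ZMod 2) : R) = 0 from AddMonoidAlgebra.single_zero a, map_zero,
        map_zero]
    · have hT : (AddMonoidAlgebra.single a (1:ZMod 2) : R) = T a := rfl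
      show PhiR phi _ = invert _ * PhiR phi 1
      rw [hT, invert_T]
      have : PhiR phi (T a) = PhiR phi (T a * 1) := by rw [mul_one]
      rw [this, PhiR_semilinear phi hd]
  exact congrFun (congrArg (fun f => f.toFun) hA) v

end Dminus

end Phibar

section Units

open AddMonoidAlgebra Finset

lemma top_coeff (h g : R) (hsne : h.coeff.support.Nonempty) (gsne : g.coeff.support.Nonempty) :
    (h * g).coeff (h.coeff.support.max' hsne + g.coeff.support.max' gsne)
      = h.coeff (h.coeff.support.max' hsne) * g.coeff (g.coeff.support.max' gsne) := by
  set Mh := h.coeff.support.max' hsne with hMh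
  set Mg := g.coeff.support.max' gsne with hMg
  rw [AddMonoidAlgebra.mul_apply]
  rw [Finsupp.sum]
  rw [Finset.sum_eq_single Mh]
  · rw [Finsupp.sum, Finset.sum_eq_single Mg]
    · rw [if_pos rfl]
    · intro a ha hne
      rw [if_neg]
      omega
    · intro habs
      rw [if_pos rfl, Finsupp.notMem_support_iff.1 habs, mul_zero]
  · intro a ha hne
    apply Finset.sum_eq_zero
    intro a2 ha2
    show (if a + a2 = Mh + Mg then h.coeff a * g.coeff a2 else 0) = 0
    rw [if_neg]
    have h1 : a ≤ Mh := Finset.le_max' _ _ ha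
    have h2 : a2 ≤ Mg := Finset.le_max' _ _ ha2
    omega
  · intro habs
    exact absurd (Finset.max'_mem _ _) habs

lemma bot_coeff (h g : R) (hsne : h.coeff.support.Nonempty) (gsne : g.coeff.support.Nonempty) :
    (h * g).coeff (h.coeff.support.min' hsne + g.coeff.support.min' gsne)
      = h.coeff (h.coeff.support.min' hsne) * g.coeff (g.coeff.support.min' gsne) := by
  set mh := h.coeff.support.min' hsne with hmh
  set mg := g.coeff.support.min' gsne with hmg
  rw [AddMonoidAlgebra.mul_apply]
  rw [Finsupp.sum]
  rw [Finset.sum_eq_single mh]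
  · rw [Finsupp.sum, Finset.sum_eq_single mg]
    · rw [if_pos rfl]
    · intro a ha hne
      rw [if_neg]
      omega
    · intro habs
      rw [if_pos rfl, Finsupp.notMem_support_iff.1 habs, mul_zero]
  · intro a ha hne
    apply Finset.sum_eq_zero
    intro a2 ha2
    show (if a + a2 = mh + mg then h.coeff a * g.coeff a2 else 0) = 0
    rw [if_neg]
    have h1 : mh ≤ a := Finset.min'_le _ _ ha
    have h2 : mg ≤ a2 := Finset.min'_le _ _ ha2
    omega
  · intro habs
    exact absurd (Finset.min'_mem _ _) habs

lemma support_one_R : (1 : R).coeff.support = {0} := by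
  rw [AddMonoidAlgebra.one_def]
  exact Finsupp.support_single_ne_zero _ one_ne_zero

lemma unit_is_T {h : R} (hu : IsUnit h) : ∃ m : ℤ, h = T m := by
  obtain ⟨g, hg⟩ := hu.exists_right_inv
  have h0 : h ≠ 0 := by
    rintro rfl
    rw [zero_mul] at hg
    exact zero_ne_one hg
  have g0 : g ≠ 0 := by
    rintro rfl
    rw [mul_zero] at hg
    exact zero_ne_one hg
  have hsne : h.coeff.support.Nonempty := Finsupp.support_nonempty_iff.2 (by simpa using h0)
  have gsne : g.coeff.support.Nonempty := Finsupp.support_nonempty_iff.2 (by simpa using g0)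
  set Mh := h.coeff.support.max' hsne with hMh
  set mh := h.coeff.support.min' hsne with hmh
  set Mg := g.coeff.support.max' gsne with hMg
  set mg := g.coeff.support.min' gsne with hmg
  have hne2 : ∀ a b : ZMod 2, a ≠ 0 → b ≠ 0 → a * b ≠ 0 := by decide
  have e1 : Mh + Mg = 0 := by
    have h1 := top_coeff h g hsne gsne
    have h2 : (h * g).coeff (Mh + Mg) ≠ 0 := by
      rw [h1]
      exact hne2 _ _ (Finsupp.mem_support_iff.1 (Finset.max'_mem _ _))
        (Finsupp.mem_support_iff.1 (Finset.max'_mem _ _))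
    have h3 : Mh + Mg ∈ (h * g).coeff.support := Finsupp.mem_support_iff.2 h2
    rw [hg, support_one_R, Finset.mem_singleton] at h3
    exact h3
  have e2 : mh + mg = 0 := by
    have h1 := bot_coeff h g hsne gsne
    have h2 : (h * g).coeff (mh + mg) ≠ 0 := by
      rw [h1]
      exact hne2 _ _ (Finsupp.mem_support_iff.1 (Finset.min'_mem _ _))
        (Finsupp.mem_support_iff.1 (Finset.min'_mem _ _))
    have h3 : mh + mg ∈ (h * g).coeff.support := Finsupp.mem_support_iff.2 h2
    rw [hg, support_one_R, Finset.mem_singleton] at h3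
    exact h3
  have hm1 : mh ≤ Mh := Finset.min'_le _ _ (Finset.max'_mem _ _)
  have hm2 : mg ≤ Mg := Finset.min'_le _ _ (Finset.max'_mem _ _)
  have hEq : mh = Mh := by omega
  have hsupp : h.coeff.support = {Mh} := by
    apply Finset.eq_singleton_iff_unique_mem.2
    refine ⟨Finset.max'_mem _ _, fun x hx => ?_⟩
    have h1 := Finset.min'_le _ _ hx
    have h2 := Finset.le_max' _ _ hx
    omega
  obtain ⟨hne0, hform⟩ := Finsupp.support_eq_singleton.1 hsupp
  have hc1 : h.coeff Mh = 1 := by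
    have h2 : ∀ c : ZMod 2, c = 0 ∨ c = 1 := by decide
    rcases h2 (h.coeff Mh) with hc | hc
    · exact absurd hc hne0
    · exact hc
  refine ⟨Mh, ?_⟩
  apply AddMonoidAlgebra.coeff_injective
  rw [hform, hc1]
  rfl

end Units

section Invariant

open Multiplicative

variable (phi : G ≃* G) (hd : sigma (phi ga) = Multiplicative.ofAdd (-1))

include hd in
lemma hd_symm : sigma (phi.symm ga) = Multiplicative.ofAdd (-1) := by
  have h1 := sigma_phi_neg phi hd (phi.symm ga)
  rw [MulEquiv.apply_symm_apply, sigma_ga] at h1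
  rw [← inv_inv (sigma (phi.symm ga)), ← h1]
  apply Multiplicative.toAdd.injective
  simp

lemma phibar_symm_phibar (y : L) : phibar phi.symm (phibar phi y) = y := by
  obtain ⟨g, rfl⟩ := pi_surj y
  rw [phibar_pi, phibar_pi, MulEquiv.symm_apply_apply]

include hd in
lemma PhiR_symm_PhiR (v : R) : PhiR phi.symm (PhiR phi v) = v := by
  have e1 : phibar phi.symm (phibar phi (inl (Multiplicative.ofAdd v)))
      = inl (Multiplicative.ofAdd v) := phibar_symm_phibar phi _
  rw [phibar_inl phi hd, phibar_inl phi.symm (hd_symm phi hd)] at e1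
  exact inl_ofAdd_inj e1

include hd in
lemma hpol_isUnit : IsUnit (PhiR phi 1) := by
  have e : invert (PhiR phi 1) * PhiR phi.symm 1 = 1 := by
    have h1 := PhiR_symm_PhiR phi hd 1
    rw [PhiR_eq phi.symm (hd_symm phi hd)] at h1
    rw [h1]
  have h2 : IsUnit (invert (PhiR phi 1)) := IsUnit.of_mul_eq_one _ e
  have h3 := h2.map (invert (R := ZMod 2))
  rwa [involutive_invert (PhiR phi 1)] at h3

/-- the coefficient-pair invariant -/
def chi (m j : ℤ) (v : R) : ZMod 2 := v.coeff j + v.coeff (m + 1 - j)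

lemma chi_add (m j : ℤ) (u v : R) : chi m j (u + v) = chi m j u + chi m j v := by
  unfold chi
  rw [show ((u + v).coeff j) = u.coeff j + v.coeff j from rfl, show ((u + v).coeff (m+1-j)) = u.coeff (m+1-j) + v.coeff (m+1-j)
    from rfl]
  ring

lemma coeff_T_mul (n : ℤ) (f : R) (y : ℤ) : ((T n * f : R)).coeff y = f.coeff (y - n) := by
  have h1 := AddMonoidAlgebra.coeff_single_mul_add f (1 : ZMod 2) n (y - n)
  rw [show n + (y - n) = y by ring] at h1
  rw [show (T n : R) = AddMonoidAlgebra.single n (1 : ZMod 2) from rfl, h1, one_mul]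

variable (mexp : ℤ) (hm : PhiR phi 1 = T mexp)

include hd hm in
lemma chi_move_zero (j : ℤ) (u : R) : chi mexp j (u + T 1 * PhiR phi u) = 0 := by
  have h1 : T 1 * PhiR phi u = T (mexp + 1) * invert u := by
    rw [PhiR_eq phi hd, hm, T_add]
    ring
  rw [h1, chi_add]
  unfold chi
  rw [coeff_T_mul, coeff_T_mul, invert_apply, invert_apply]
  have e1 : -(j - (mexp + 1)) = mexp + 1 - j := by ring
  have e2 : -(mexp + 1 - j - (mexp + 1)) = j := by ring
  rw [e1, e2]
  have : ∀ a b : ZMod 2, (a + b) + (b + a) = 0 := by decide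
  exact this _ _

include hd in
lemma move_left_eq (u : R) (X : L) (hX : X.right = Multiplicative.ofAdd 1) :
    (inl (Multiplicative.ofAdd u) * X * (phibar phi (inl (Multiplicative.ofAdd u)))⁻¹).left.toAdd
      = X.left.toAdd + (u + T 1 * PhiR phi u) := by
  rw [phibar_inl phi hd, ← map_inv]
  have hB : (Multiplicative.ofAdd (PhiR phi u))⁻¹ = Multiplicative.ofAdd (PhiR phi u) := by
    rw [← ofAdd_neg, R_neg]
  rw [hB]
  rw [mul_left, mul_left, mul_right, left_inl, right_inl, left_inl, one_mul, map_one,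
    MulAut.one_apply, hX, act_apply]
  rw [toAdd_mul, toAdd_mul, toAdd_ofAdd, toAdd_ofAdd]
  ring

/-- normalization exponent -/
noncomputable def normm (Y : L) : ℤ := (1 - (rightHom Y).toAdd) / 2

noncomputable def normEl (Y : L) : L :=
  inr (Multiplicative.ofAdd (normm Y)) * Y
    * (phibar phi (inr (Multiplicative.ofAdd (normm Y))))⁻¹

include hd in
lemma rightHom_move (P Y : L) :
    (rightHom (P * Y * (phibar phi P)⁻¹)).toAdd
      = (rightHom P).toAdd + (rightHom Y).toAdd + (rightHom P).toAdd := by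
  have e : rightHom (P * Y * (phibar phi P)⁻¹)
      = rightHom P * rightHom Y * (rightHom (phibar phi P))⁻¹ := by
    rw [map_mul, map_mul, map_inv]
  rw [rightHom_phibar phi hd, inv_inv] at e
  rw [e, toAdd_mul, toAdd_mul]

include hd in
lemma rightHom_normEl (Y : L) (hodd : (rightHom Y).toAdd % 2 = 1) :
    rightHom (normEl phi Y) = Multiplicative.ofAdd 1 := by
  apply Multiplicative.toAdd.injective
  rw [normEl, rightHom_move phi hd, rightHom_inr, toAdd_ofAdd, toAdd_ofAdd, normm]
  omega

lemma normEl_left (Y : L) (hY : rightHom Y = Multiplicative.ofAdd 1) :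
    normEl phi Y = Y := by
  have h0 : normm Y = 0 := by rw [normm, hY]; rfl
  rw [normEl, h0, ofAdd_zero, map_one, map_one, one_mul, inv_one, mul_one]

noncomputable def inva (j : ℤ) (Y : L) : ZMod 2 :=
  if (rightHom Y).toAdd % 2 = 1 then chi mexp j ((normEl phi Y).left.toAdd) else 0

lemma move_comp (Q1 Q2 Z : L) :
    Q1 * (Q2 * Z * (phibar phi Q2)⁻¹) * (phibar phi Q1)⁻¹
      = (Q1 * Q2) * Z * (phibar phi (Q1 * Q2))⁻¹ := by
  rw [map_mul, mul_inv_rev]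
  group

include hd hm in
lemma inva_const (j : ℤ) (P Y : L) :
    inva phi mexp j (P * Y * (phibar phi P)⁻¹) = inva phi mexp j Y := by
  set Y' := P * Y * (phibar phi P)⁻¹ with hY'
  have hpar : (rightHom Y').toAdd % 2 = (rightHom Y).toAdd % 2 := by
    rw [hY', rightHom_move phi hd]
    omega
  by_cases hodd : (rightHom Y).toAdd % 2 = 1
  · have hodd' : (rightHom Y').toAdd % 2 = 1 := by rw [hpar]; exact hodd
    rw [inva, inva, if_pos hodd, if_pos hodd']
    -- X1 = normEl Y', X2 = normEl Y, X1 = Q * X2 * (phibar Q)⁻¹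
    set g1 : L := inr (Multiplicative.ofAdd (normm Y')) with hg1
    set g2 : L := inr (Multiplicative.ofAdd (normm Y)) with hg2
    set X1 := normEl phi Y' with hX1
    set X2 := normEl phi Y with hX2
    have hYe : Y = g2⁻¹ * X2 * (phibar phi g2⁻¹)⁻¹ := by
      rw [hX2, normEl, map_inv, inv_inv, ← hg2]
      group
    have hcomb : X1 = (g1 * (P * g2⁻¹)) * X2 * (phibar phi (g1 * (P * g2⁻¹)))⁻¹ := by
      calc X1 = g1 * Y' * (phibar phi g1)⁻¹ := by rw [hX1, normEl, ← hg1]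
      _ = g1 * (P * Y * (phibar phi P)⁻¹) * (phibar phi g1)⁻¹ := by rw [hY']
      _ = g1 * (P * (g2⁻¹ * X2 * (phibar phi g2⁻¹)⁻¹) * (phibar phi P)⁻¹)
            * (phibar phi g1)⁻¹ := by rw [← hYe]
      _ = g1 * ((P * g2⁻¹) * X2 * (phibar phi (P * g2⁻¹))⁻¹) * (phibar phi g1)⁻¹ := by
            rw [move_comp phi P g2⁻¹ X2]
      _ = (g1 * (P * g2⁻¹)) * X2 * (phibar phi (g1 * (P * g2⁻¹)))⁻¹ := by
            rw [move_comp phi g1 (P * g2⁻¹) X2]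
    set Q := g1 * (P * g2⁻¹) with hQ
    have hr1 : rightHom X1 = Multiplicative.ofAdd 1 := rightHom_normEl phi hd Y' hodd'
    have hr2 : rightHom X2 = Multiplicative.ofAdd 1 := rightHom_normEl phi hd Y hodd
    have hq0 : rightHom Q = 1 := by
      have hmv := rightHom_move phi hd Q X2
      rw [← hcomb, hr1, hr2, toAdd_ofAdd] at hmv
      apply Multiplicative.toAdd.injective
      rw [toAdd_one]
      omega
    have hQinl : Q = inl Q.left := mem_inl_range hq0
    have hX2r : X2.right = Multiplicative.ofAdd 1 := by rw [← rightHom_eq_right]; exact hr2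
    have hfinal : X1.left.toAdd
        = X2.left.toAdd + (Q.left.toAdd + T 1 * PhiR phi Q.left.toAdd) := by
      rw [hcomb, hQinl]
      rw [show inl Q.left = inl (Multiplicative.ofAdd (Q.left.toAdd)) by rw [ofAdd_toAdd]]
      exact move_left_eq phi hd _ X2 hX2r
    rw [hfinal, chi_add, chi_move_zero phi hd mexp hm, add_zero]
  · have hodd' : ¬ ((rightHom Y').toAdd % 2 = 1) := by rw [hpar]; exact hodd
    rw [inva, inva, if_neg hodd, if_neg hodd']

end Invariant

section Final

open Multiplicative

lemma coeff_T (a b : ℤ) : (T a : R).coeff b = if a = b then 1 else 0 := by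
  rw [show (T a : R) = AddMonoidAlgebra.single a (1 : ZMod 2) from rfl, AddMonoidAlgebra.coeff_single,
    Finsupp.single_apply]

lemma case_pos (phi : G ≃* G) (hd1 : sigma (phi ga) = ofAdd 1) :
    Infinite (Quot (fun x y : G => ∃ g, x = g * y * (phi g)⁻¹)) := by
  set r := fun x y : G => ∃ g, x = g * y * (phi g)⁻¹ with hr
  have hphi : ∀ z, sigma (phi z) = sigma z := by
    intro z
    rw [sigma_phi phi, hd1, toAdd_ofAdd, zpow_one]
  have compat : ∀ x y : G, r x y → sigma x = sigma y := by
    rintro x y ⟨g, rfl⟩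
    rw [map_mul, map_mul, map_inv, hphi, mul_comm (sigma g), mul_assoc, mul_inv_cancel, mul_one]
  let F : Quot r → Multiplicative ℤ := Quot.lift sigma compat
  have hval : ∀ k : ℤ, F (Quot.mk r (ga ^ k)) = ofAdd k := by
    intro k
    show sigma (ga ^ k) = ofAdd k
    rw [map_zpow, sigma_ga]
    apply Multiplicative.toAdd.injective
    simp
  refine Infinite.of_injective (fun s : ℕ => Quot.mk r (ga ^ (s : ℤ))) ?_
  intro s1 s2 h
  have h2 := congrArg F h
  rw [hval, hval] at h2
  have h3 := congrArg Multiplicative.toAdd h2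
  simp only [toAdd_ofAdd] at h3
  exact_mod_cast h3

lemma case_neg (phi : G ≃* G) (hd : sigma (phi ga) = ofAdd (-1)) :
    Infinite (Quot (fun x y : G => ∃ g, x = g * y * (phi g)⁻¹)) := by
  obtain ⟨mexp, hm⟩ := unit_is_T (hpol_isUnit phi hd)
  set r := fun x y : G => ∃ g, x = g * y * (phi g)⁻¹ with hr
  have compat : ∀ j : ℤ, ∀ x y : G, r x y → inva phi mexp j (pi x) = inva phi mexp j (pi y) := by
    rintro j x y ⟨g, rfl⟩
    rw [map_mul, map_mul, map_inv, ← phibar_pi]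
    exact inva_const phi hd mexp hm j (pi g) (pi y)
  have pi_gk : ∀ k : ℤ, pi (bn k * ga) = inl (ofAdd (T k)) * inr (ofAdd 1) := by
    intro k
    rw [map_mul, pi_bn]
    rfl
  have hval : ∀ j k : ℤ, inva phi mexp j (pi (bn k * ga)) = chi mexp j (T k) := by
    intro j k
    rw [pi_gk]
    set Y : L := inl (ofAdd (T k)) * inr (ofAdd 1) with hY
    have hrY : rightHom Y = ofAdd 1 := by
      rw [hY, map_mul, rightHom_inl, rightHom_inr, one_mul]
    have hYleft : Y.left = ofAdd (T k) := by
      rw [hY, mul_left, left_inl, right_inl, map_one, MulAut.one_apply, left_inr, mul_one]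
    rw [inva, if_pos (by rw [hrY]; rfl), normEl_left phi Y hrY, hYleft, toAdd_ofAdd]
  set N : ℤ := (mexp.natAbs : ℤ) + 1 with hN
  refine Infinite.of_injective (fun s : ℕ => Quot.mk r (bn (N + s) * ga)) ?_
  intro s1 s2 h
  by_contra hne
  set k : ℤ := N + s1 with hk
  set l : ℤ := N + s2 with hl
  let F : Quot r → ZMod 2 := Quot.lift (fun x => inva phi mexp k (pi x)) (compat k)
  have h2 := congrArg F h
  have hFk : F (Quot.mk r (bn k * ga)) = chi mexp k (T k) := hval k k
  have hFl : F (Quot.mk r (bn l * ga)) = chi mexp k (T l) := hval k l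
  rw [hFk, hFl] at h2
  have e1 : chi mexp k (T k) = 1 := by
    rw [chi, coeff_T, coeff_T, if_pos rfl, if_neg (by omega)]
    rfl
  have e2 : chi mexp k (T l) = 0 := by
    have hlk : l ≠ k := by
      intro habs
      apply hne
      have : (s1 : ℤ) = s2 := by omega
      exact_mod_cast this
    rw [chi, coeff_T, coeff_T, if_neg (by omega), if_neg (by omega)]
    rfl
  rw [e1, e2] at h2
  exact absurd h2 (by decide)

end Final

/-- the free product `ℤ * ℤ/2` has the `R_∞` property: for every automorphism
`φ`, the set of `φ`-twisted conjugacy classes (`x ~ y` iff `x = g y φ(g)⁻¹` for some `g`) is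
infinite. -/
theorem Rinfinity_int_coprod_zmodTwo
    (φ : Monoid.Coprod (Multiplicative ℤ) (Multiplicative (ZMod 2)) ≃*
         Monoid.Coprod (Multiplicative ℤ) (Multiplicative (ZMod 2))) :
    Infinite (Quot (fun x y : Monoid.Coprod (Multiplicative ℤ) (Multiplicative (ZMod 2)) =>
      ∃ g, x = g * y * (φ g)⁻¹)) := by
  rcases d_unit φ with h1 | h1
  · apply case_pos φ
    apply Multiplicative.toAdd.injective
    rw [h1]
    rfl
  · apply case_neg φ
    apply Multiplicative.toAdd.injective
    rw [h1]
    rfl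

end VAG
end
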